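/- arXiv:1506.00018 — 2 statements merged into one kernel-verified Lean document; each statement's English description precedes it below -/
import Mathlib

section
/- Let X be a Lefschetz complex over a ring R with unity, let 𝒱 be a multivector field on X with X invariant, let S be an isolated invariant set, and let P = (P₁,P₂) be an index pair for S. Define E_P := {x ∈ P₁ : every forward solution of 𝒱 starting at x has some value in P₂}. Then P* := (S ∪ E_P, P₂) is an index pair for S, and P** := (S ∪ E_P, E_P) is a saturated index pair for S. -/
open scoped Classical

namespace CMVF

variable {R : Type*} [Ring R] {X : Type*} [Fintype X]

/-- A Lefschetz complex over `R` with cells `X`. -/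
structure Lefschetz (R : Type*) [Ring R] (X : Type*) [Fintype X] where
  dim : X → ℕ
  κ : X → X → R
  dim_facet : ∀ x y, κ x y ≠ 0 → dim x = dim y + 1
  κ_sq : ∀ x z, (∑ y : X, κ x y * κ y z) = 0

namespace Lefschetz

variable (L : Lefschetz R X)

/-- The face order `y ≤κ x` : the partial order generated by the facet relation. -/
def le (y x : X) : Prop := Relation.ReflTransGen (fun a b => L.κ b a ≠ 0) y x

/-- Closure of a set of cells: all faces of cells of `A`. -/
def cls (A : Set X) : Set X := {z | ∃ a ∈ A, L.le z a}

/-- Closure of a single cell. -/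
def clPt (x : X) : Set X := L.cls {x}

/-- The minimal open set containing `x`. -/
def opn (x : X) : Set X := {z | L.le x z}

/-- `A` is closed. -/
def Closed (A : Set X) : Prop := L.cls A = A

/-- The mouth of `A`. -/
def mo (A : Set X) : Set X := L.cls A \ A

/-- `A` is proper: its mouth is closed. -/
def Proper (A : Set X) : Prop := L.Closed (L.mo A)

/-- Relative closure within an ambient subcomplex `W`. -/
def clsIn (W A : Set X) : Set X := L.cls A ∩ W

/-- Relative mouth within an ambient subcomplex `W`. -/
def moIn (W A : Set X) : Set X := L.clsIn W A \ A

/-- The boundary operator of the subcomplex determined by `A`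
(`∂ x = ∑ y ∈ A, κ x y • y` for `x ∈ A`). -/
noncomputable def bd (A : Set X) : (X → R) →ₗ[R] (X → R) where
  toFun f := fun y => if y ∈ A then ∑ x : X, (if x ∈ A then f x * L.κ x y else 0) else 0
  map_add' f g := by
    funext y
    by_cases hy : y ∈ A
    · simp only [hy, if_true, Pi.add_apply]
      rw [← Finset.sum_add_distrib]
      refine Finset.sum_congr rfl fun x _ => ?_
      by_cases hx : x ∈ A <;> simp [hx, add_mul]
    · simp [hy]
  map_smul' r f := by
    funext y
    by_cases hy : y ∈ A
    · simp only [hy, if_true, Pi.smul_apply, smul_eq_mul, RingHom.id_apply]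
      rw [Finset.mul_sum]
      refine Finset.sum_congr rfl fun x _ => ?_
      by_cases hx : x ∈ A <;> simp [hx, mul_assoc]
    · simp [hy]

/-- The `n`-chains of the subcomplex determined by `A`. -/
noncomputable def chainGroup (A : Set X) (n : ℕ) : Submodule R (X → R) :=
  Submodule.span R {f | ∃ x ∈ A, L.dim x = n ∧ f = Pi.single x 1}

/-- The `n`-cycles of the subcomplex determined by `A`. -/
noncomputable def cycles (A : Set X) (n : ℕ) : Submodule R (X → R) :=
  L.chainGroup A n ⊓ LinearMap.ker (L.bd A)

/-- The `n`-boundaries of the subcomplex determined by `A`. -/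
noncomputable def boundaries (A : Set X) (n : ℕ) : Submodule R (X → R) :=
  (L.chainGroup A (n + 1)).map (L.bd A)

/-- The Lefschetz homology `H^κ_n(A)` of the subcomplex determined by `A`. -/
noncomputable def homology (A : Set X) (n : ℕ) : Type _ :=
  (L.cycles A n) ⧸ ((L.boundaries A n).comap (L.cycles A n).subtype)

noncomputable instance homologyAddCommGroup (A : Set X) (n : ℕ) :
    AddCommGroup (L.homology A n) :=
  inferInstanceAs (AddCommGroup
    ((L.cycles A n) ⧸ ((L.boundaries A n).comap (L.cycles A n).subtype)))

noncomputable instance homologyModule (A : Set X) (n : ℕ) :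
    Module R (L.homology A n) :=
  inferInstanceAs (Module R
    ((L.cycles A n) ⧸ ((L.boundaries A n).comap (L.cycles A n).subtype)))

/-- `A` is a zero space: its Lefschetz homology vanishes. -/
def HomologyZero (A : Set X) : Prop := ∀ n, Subsingleton (L.homology A n)

/-- The Poincaré polynomial `p_A(t) = ∑ rank H^κ_n(A) tⁿ`. -/
noncomputable def poincare (A : Set X) : Polynomial ℕ :=
  ∑ n ∈ Finset.image L.dim Finset.univ,
    Polynomial.C (Module.finrank R (L.homology A n)) * Polynomial.X ^ n

/-- `V` is a multivector: proper, with a unique maximal element. -/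
def IsMV (V : Set X) : Prop :=
  L.Proper V ∧ ∃! m, m ∈ V ∧ ∀ x ∈ V, L.le x m

/-- A regular multivector: one with vanishing Lefschetz homology. -/
def Regular (V : Set X) : Prop := L.HomologyZero V

end Lefschetz

/-- A combinatorial multivector field on a Lefschetz complex: a partition into multivectors. -/
structure MVField {R : Type*} [Ring R] {X : Type*} [Fintype X] (L : Lefschetz R X) where
  mvs : Set (Set X)
  isMV : ∀ V ∈ mvs, L.IsMV V
  cover : ∀ x : X, ∃! V, V ∈ mvs ∧ x ∈ V

namespace MVField

variable {L : Lefschetz R X} (F : MVField L)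

/-- `[x]` : the multivector containing `x`. -/
noncomputable def mclass (x : X) : Set X := (F.cover x).exists.choose

lemma mclass_spec (x : X) : F.mclass x ∈ F.mvs ∧ x ∈ F.mclass x :=
  (F.cover x).exists.choose_spec

/-- `x★` : the dominant cell of the multivector containing `x`. -/
noncomputable def star (x : X) : X :=
  ((F.isMV _ (F.mclass_spec x).1).2).exists.choose

/-- `[x]°` : the regular part of the multivector of `x`. -/
noncomputable def regPart (x : X) : Set X :=
  if L.Regular (F.mclass x) then F.mclass x else F.mclass x \ {F.star x}

/-- The multivalued map `Π_𝒱`. -/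
noncomputable def Pi (x : X) : Set X :=
  if x = F.star x then L.clPt x \ F.regPart x else {F.star x}

/-- The multivalued map of the multivector field restricted to the subcomplex `W`. -/
noncomputable def PiIn (W : Set X) (x : X) : Set X := F.Pi x ∩ W

/-- `φ : ℤ → X` is a full solution of the multivector field restricted to `W`. -/
def IsSolIn (W : Set X) (φ : ℤ → X) : Prop := ∀ i, φ (i + 1) ∈ F.PiIn W (φ i)

/-- There is a full solution (of the field restricted to `W`) through `x` with values in `A`. -/
def FullSolThroughIn (W : Set X) (x : X) (A : Set X) : Prop :=
  ∃ φ : ℤ → X, F.IsSolIn W φ ∧ (∃ i, φ i = x) ∧ ∀ i, φ i ∈ A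

/-- `A` is `𝒱`-compatible. -/
def Compat (A : Set X) : Prop := ∀ x ∈ A, F.mclass x ⊆ A

/-- `[A]⁻` : the maximal `𝒱`-compatible subset of `A`. -/
def lowerC (A : Set X) : Set X := {x ∈ A | F.mclass x ⊆ A}

/-- `[A]⁺` : the minimal `𝒱`-compatible superset of `A`. -/
def upperC (A : Set X) : Set X := ⋃ x ∈ A, F.mclass x

/-- `Inv A`, the invariant part of `A`, computed in the subcomplex `W`. -/
def InvPartIn (W A : Set X) : Set X :=
  {x ∈ A | F.FullSolThroughIn W (F.star x) (F.lowerC A)}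

/-- `A` is invariant (within the subcomplex `W`). -/
def InvariantIn (W A : Set X) : Prop := F.InvPartIn W A = A

/-- `φ` is a path (solution) on the integer interval `[a,b]`, within the subcomplex `W`. -/
def IsPathOnIn (W : Set X) (a b : ℤ) (φ : ℤ → X) : Prop :=
  ∀ i, a ≤ i → i < b → φ (i + 1) ∈ F.PiIn W (φ i)

/-- `S` admits an internal tangency within the subcomplex `W`. -/
def HasInternalTangencyIn (W S : Set X) : Prop :=
  ∃ (a b : ℤ) (φ : ℤ → X), a ≤ b ∧ F.IsPathOnIn W a b φ ∧
    (∀ i, a ≤ i → i ≤ b → φ i ∈ L.clsIn W S) ∧ φ a ∈ S ∧ φ b ∈ S ∧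
    ∃ i, a ≤ i ∧ i ≤ b ∧ φ i ∈ L.moIn W S

/-- `S` is an isolated invariant set within the subcomplex `W`. -/
def IsoInvIn (W S : Set X) : Prop :=
  F.InvariantIn W S ∧ ¬ F.HasInternalTangencyIn W S

/-- `N` is a trapping region within the subcomplex `W`. -/
def TrappingIn (W N : Set X) : Prop :=
  N ⊆ W ∧ F.Compat N ∧ ∀ x ∈ N, F.PiIn W x ⊆ N

/-- `N` is a backward trapping region within the subcomplex `W`. -/
def BackTrappingIn (W N : Set X) : Prop :=
  N ⊆ W ∧ F.Compat N ∧ ∀ x ∈ W, ∀ y ∈ F.PiIn W x, y ∈ N → x ∈ N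

/-- `A` is an attractor within the subcomplex `W`. -/
def AttractorIn (W A : Set X) : Prop :=
  ∃ N, F.TrappingIn W N ∧ A = F.InvPartIn W N

/-- `A` is a repeller within the subcomplex `W`. -/
def RepellerIn (W A : Set X) : Prop :=
  ∃ N, F.BackTrappingIn W N ∧ A = F.InvPartIn W N

/-- The α-limit set of a full solution `φ`. -/
def alphaIn (W : Set X) (φ : ℤ → X) : Set X :=
  ⋂ k : ℕ, F.InvPartIn W (F.upperC (φ '' {i : ℤ | i ≤ -(k : ℤ)}))

/-- The ω-limit set of a full solution `φ`. -/
def omegaIn (W : Set X) (φ : ℤ → X) : Set X :=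
  ⋂ k : ℕ, F.InvPartIn W (F.upperC (φ '' {i : ℤ | (k : ℤ) ≤ i}))

/-- `C(A',A)` : the set of cells lying on connections running from `A'` to `A`. -/
def ConnIn (W A' A : Set X) : Set X :=
  {x | ∃ φ : ℤ → X, F.IsSolIn W φ ∧ (∃ i, φ i = F.star x) ∧
        F.alphaIn W φ ⊆ A' ∧ F.omegaIn W φ ⊆ A}

/-- `(A, Rp)` is an attractor-repeller pair in the subcomplex `W`. -/
def ARPairIn (W A Rp : Set X) : Prop :=
  F.AttractorIn W A ∧ F.RepellerIn W Rp ∧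
    A = F.InvPartIn W (W \ Rp) ∧ Rp = F.InvPartIn W (W \ A)

/-- `M` is a Morse decomposition of the subcomplex `W`, with admissible order `le`. -/
def MorseDecompIn (W : Set X) {P : Type*} [Finite P] (le : P → P → Prop)
    (M : P → Set X) : Prop :=
  IsPartialOrder P le ∧
  (∀ r, F.IsoInvIn W (M r)) ∧
  (∀ r r', r ≠ r' → Disjoint (M r) (M r')) ∧
  (∀ φ : ℤ → X, F.IsSolIn W φ →
    ∃ r r', le r r' ∧ F.alphaIn W φ ⊆ M r' ∧ F.omegaIn W φ ⊆ M r) ∧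
  (∀ φ : ℤ → X, F.IsSolIn W φ → ∀ r,
    F.alphaIn W φ ⊆ M r → F.omegaIn W φ ⊆ M r → Set.range φ ⊆ M r)

/-- The Morse set `M(I)` of a family of sets indexed by `I ⊆ P`. -/
def MorseSetIn (W : Set X) {P : Type*} (M : P → Set X) (I : Set P) : Set X :=
  ⋃ r ∈ I, ⋃ r' ∈ I, F.ConnIn W (M r') (M r)

/-- `(P₁, P₂)` is an index pair for the isolated invariant set `S`. -/
def IndexPair (S P₁ P₂ : Set X) : Prop :=
  L.Closed P₁ ∧ L.Closed P₂ ∧ P₂ ⊆ P₁ ∧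
  (∀ x ∈ P₂, ∀ y ∈ F.Pi x, y ∈ P₁ → y ∈ P₂) ∧
  (∀ x ∈ P₁, (∃ y ∈ F.Pi x, y ∉ P₁) → x ∈ P₂) ∧
  S = F.InvPartIn Set.univ (P₁ \ P₂)

/-- `x ⤳_A y` : there is a path of length at least two in `A` from `x★` to `y★`. -/
def PathConn (A : Set X) (x y : X) : Prop :=
  ∃ (a b : ℤ) (φ : ℤ → X), a < b ∧
    (∀ i, a ≤ i → i < b → φ (i + 1) ∈ F.Pi (φ i)) ∧
    (∀ i, a ≤ i → i ≤ b → φ i ∈ A) ∧ φ a = F.star x ∧ φ b = F.star y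

/-- The chain recurrent set. -/
def CR : Set X := {x | F.PathConn Set.univ x x}

/-- `B` is a basic set: an equivalence class of mutual connectedness in `CR`. -/
def IsBasicSet (B : Set X) : Prop :=
  ∃ x ∈ F.CR, B = {y ∈ F.CR | F.PathConn Set.univ x y ∧ F.PathConn Set.univ y x}

/-- The set `E_P` of cells of `P₁` all of whose forward solutions meet `P₂`. -/
def Ep (P₁ P₂ : Set X) : Set X :=
  {x ∈ P₁ | ∀ φ : ℕ → X, φ 0 = x → (∀ i, φ (i + 1) ∈ F.Pi (φ i)) → ∃ i, φ i ∈ P₂}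

/-- The preorder `≤_𝒱` induced by the arrows of the multivector field. -/
def leV : X → X → Prop := Relation.ReflTransGen (fun y x => y ∈ F.Pi x)

/-- The multivector field is acyclic: `≤_𝒱` is a partial order. -/
def Acyclic : Prop := ∀ x y, F.leV x y → F.leV y x → x = y

end MVField

end CMVF

open CMVF

section AuxIPS

variable {R : Type*} [Ring R] {X : Type*} [Fintype X] {L : Lefschetz R X} (F : MVField L)

open CMVF.Lefschetz CMVF.MVField

lemma aux_star_spec (x : X) :
    F.star x ∈ F.mclass x ∧ ∀ v ∈ F.mclass x, L.le v (F.star x) :=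
  ((F.isMV _ (F.mclass_spec x).1).2).exists.choose_spec

lemma aux_mclass_eq {x v : X} (h : v ∈ F.mclass x) : F.mclass v = F.mclass x :=
  (F.cover v).unique ⟨(F.mclass_spec v).1, (F.mclass_spec v).2⟩ ⟨(F.mclass_spec x).1, h⟩

lemma aux_star_eq {x v : X} (h : v ∈ F.mclass x) : F.star v = F.star x := by
  have hu := (F.isMV _ (F.mclass_spec x).1).2
  have s1 := aux_star_spec F v
  rw [aux_mclass_eq F h] at s1
  exact hu.unique s1 (aux_star_spec F x)

lemma aux_le_star (x : X) : L.le x (F.star x) :=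
  (aux_star_spec F x).2 x (F.mclass_spec x).2

lemma aux_star_star (x : X) : F.star (F.star x) = F.star x :=
  aux_star_eq F (aux_star_spec F x).1

lemma aux_pi_ne {x : X} (h : x ≠ F.star x) : F.Pi x = {F.star x} := by
  unfold MVField.Pi
  rw [if_neg h]

lemma aux_pi_star (x : X) :
    F.Pi (F.star x) = L.clPt (F.star x) \ F.regPart (F.star x) := by
  unfold MVField.Pi
  rw [if_pos (aux_star_star F x).symm]

lemma aux_regPart_subset (x : X) : F.regPart x ⊆ F.mclass x := by
  unfold MVField.regPart
  split_ifs
  · exact subset_rfl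
  · exact Set.diff_subset

lemma aux_mem_pi_star {x z : X} (hz : L.le z (F.star x)) (hm : z ∉ F.mclass x) :
    z ∈ F.Pi (F.star x) := by
  rw [aux_pi_star]
  refine ⟨⟨F.star x, rfl, hz⟩, fun hc => hm ?_⟩
  have := aux_regPart_subset F (F.star x) hc
  rwa [aux_mclass_eq F (aux_star_spec F x).1] at this

lemma aux_le_of_pi {x y : X} (h : y ∈ F.Pi x) : L.le y (F.star x) := by
  by_cases hx : x = F.star x
  · rw [MVField.Pi, if_pos hx] at h
    obtain ⟨⟨a, ha, hle⟩, -⟩ := h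
    rw [Set.mem_singleton_iff] at ha
    rw [← hx, ← ha]
    exact hle
  · rw [aux_pi_ne F hx, Set.mem_singleton_iff] at h
    rw [h]
    exact Relation.ReflTransGen.refl

lemma aux_closed_mem {A : Set X} (hA : L.Closed A) {a z : X} (ha : a ∈ A)
    (h : L.le z a) : z ∈ A := by
  rw [← hA]
  exact ⟨a, ha, h⟩

end AuxIPS

variable {R : Type*} [Ring R] {X : Type*} [Fintype X]

/-- Theorem: for an index pair `P = (P₁,P₂)` of `S` and
`E_P = {x ∈ P₁ | every forward solution from x meets P₂}`, the pair `(S ∪ E_P, P₂)`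
is an index pair for `S` and `(S ∪ E_P, E_P)` is a saturated index pair for `S`. -/
theorem index_pair_saturation (L : Lefschetz R X) (F : MVField L)
    (hX : F.InvariantIn Set.univ Set.univ) (S : Set X) (hS : F.IsoInvIn Set.univ S)
    (P₁ P₂ : Set X) (hP : F.IndexPair S P₁ P₂) :
    F.IndexPair S (S ∪ F.Ep P₁ P₂) P₂ ∧
    F.IndexPair S (S ∪ F.Ep P₁ P₂) (F.Ep P₁ P₂) ∧
    (S ∪ F.Ep P₁ P₂) \ F.Ep P₁ P₂ = S := by
  have hCl1 : L.Closed P₁ := hP.1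
  have hCl2 : L.Closed P₂ := hP.2.1
  have hsub12 : P₂ ⊆ P₁ := hP.2.2.1
  have hIP1 : ∀ x ∈ P₂, ∀ y ∈ F.Pi x, y ∈ P₁ → y ∈ P₂ := hP.2.2.2.1
  have hIP2 : ∀ x ∈ P₁, (∃ y ∈ F.Pi x, y ∉ P₁) → x ∈ P₂ := hP.2.2.2.2.1
  have hSdef : S = F.InvPartIn Set.univ (P₁ \ P₂) := hP.2.2.2.2.2
  have hS1 : F.InvPartIn Set.univ S = S := hS.1
  have hSP : S ⊆ P₁ \ P₂ := by
    rw [hSdef]; exact fun x hx => hx.1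
  have hP2E : P₂ ⊆ F.Ep P₁ P₂ := fun x hx => ⟨hsub12 hx, fun φ h0 _ => ⟨0, h0.symm ▸ hx⟩⟩
  have hEP1 : F.Ep P₁ P₂ ⊆ P₁ := fun x hx => hx.1
  have hSE1 : S ∪ F.Ep P₁ P₂ ⊆ P₁ := fun x hx => hx.elim (fun h => (hSP h).1) (fun h => hEP1 h)
  have hexit : ∀ x ∈ P₁, x ∉ P₂ → ∀ y ∈ F.Pi x, y ∈ P₁ := by
    intro x hx hx2 y hy
    by_contra hc
    exact hx2 (hIP2 x hx ⟨y, hy, hc⟩)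
  have hnotE : ∀ z, z ∈ P₁ → z ∉ P₂ → z ∉ F.Ep P₁ P₂ →
      ∃ η : ℕ → X, η 0 = z ∧ (∀ i, η (i + 1) ∈ F.Pi (η i)) ∧ ∀ i, η i ∈ P₁ \ P₂ := by
    intro z hz1 hz2 hzE
    have hzE' : ¬ ∀ φ : ℕ → X, φ 0 = z → (∀ i, φ (i + 1) ∈ F.Pi (φ i)) → ∃ i, φ i ∈ P₂ :=
      fun h => hzE ⟨hz1, h⟩
    push_neg at hzE'
    obtain ⟨φ, h0, hstep, havoid⟩ := hzE'
    refine ⟨φ, h0, hstep, ?_⟩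
    intro i
    induction i with
    | zero => exact ⟨h0.symm ▸ hz1, havoid 0⟩
    | succ n ih => exact ⟨hexit _ ih.1 ih.2 _ (hstep n), havoid (n + 1)⟩
  have hSsol : ∀ x ∈ S, ∃ ψ : ℤ → X, (∀ i, ψ (i + 1) ∈ F.Pi (ψ i)) ∧ ψ 0 = F.star x ∧
      ∀ i, ψ i ∈ F.lowerC S := by
    intro x hx
    have hx' : x ∈ F.InvPartIn Set.univ S := hS1.symm ▸ hx
    simp only [MVField.InvPartIn, MVField.FullSolThroughIn, MVField.IsSolIn, MVField.PiIn,
      Set.inter_univ, Set.mem_sep_iff] at hx'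
    obtain ⟨-, φ, hsol, ⟨i0, hi0⟩, hval⟩ := hx'
    refine ⟨fun i => φ (i + i0), fun i => ?_, by simpa using hi0, fun i => hval _⟩
    show φ (i + 1 + i0) ∈ F.Pi (φ (i + i0))
    have he : i + 1 + i0 = (i + i0) + 1 := by ring
    rw [he]
    exact hsol _
  have hScompat : ∀ x ∈ S, F.mclass x ⊆ S := by
    intro x hx
    obtain ⟨ψ, -, h0, hval⟩ := hSsol x hx
    have h := hval 0
    simp only [MVField.lowerC, Set.mem_sep_iff] at h
    rw [h0] at h
    rw [← aux_mclass_eq F (aux_star_spec F x).1]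
    exact h.2
  have hnotES : ∀ x ∈ S, x ∉ F.Ep P₁ P₂ := by
    intro x hx hxE
    obtain ⟨ψ, hstep, h0, hval⟩ := hSsol x hx
    have hvalS : ∀ i, ψ i ∈ S := by
      intro i
      have := hval i
      simp only [MVField.lowerC, Set.mem_sep_iff] at this
      exact this.1
    by_cases hxs : x = F.star x
    · have h0' : ψ ((0 : ℕ) : ℤ) = x := by
        rw [show ((0 : ℕ) : ℤ) = 0 by norm_num, h0, ← hxs]
      obtain ⟨i, hi⟩ := hxE.2 (fun n : ℕ => ψ (n : ℤ)) h0' (fun n => by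
        show ψ (((n : ℕ) + 1 : ℕ) : ℤ) ∈ F.Pi (ψ ((n : ℕ) : ℤ))
        push_cast
        exact hstep _)
      exact (hSP (hvalS i)).2 hi
    · have hcases : ∀ n : ℕ, (Nat.casesOn (n + 1) x (fun k => ψ (k : ℤ)) : X) ∈
          F.Pi (Nat.casesOn n x (fun k => ψ (k : ℤ))) := by
        intro n
        cases n with
        | zero =>
          show ψ ((0 : ℕ) : ℤ) ∈ F.Pi x
          rw [show ((0 : ℕ) : ℤ) = 0 by norm_num, h0, aux_pi_ne F hxs]
          exact rfl
        | succ k =>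
          show ψ ((k + 1 : ℕ) : ℤ) ∈ F.Pi (ψ ((k : ℕ) : ℤ))
          push_cast
          exact hstep _
      obtain ⟨i, hi⟩ := hxE.2 (fun n : ℕ => Nat.casesOn n x (fun k => ψ (k : ℤ))) rfl hcases
      cases i with
      | zero => exact (hSP hx).2 hi
      | succ k => exact (hSP (hvalS k)).2 hi
  have hC1 : ∀ a ∈ F.Ep P₁ P₂, ∀ y ∈ F.Pi a, y ∈ P₁ → y ∈ F.Ep P₁ P₂ := by
    intro a ha y hy hy1
    by_cases hy2 : y ∈ P₂
    · exact hP2E hy2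
    by_cases ha2 : a ∈ P₂
    · exact absurd (hIP1 a ha2 y hy hy1) hy2
    by_contra hyE
    obtain ⟨η, h0, hstep, hval⟩ := hnotE y hy1 hy2 hyE
    have hsteps : ∀ n : ℕ, (Nat.casesOn (n + 1) a η : X) ∈ F.Pi (Nat.casesOn n a η) := by
      intro n
      cases n with
      | zero => show η 0 ∈ F.Pi a; rw [h0]; exact hy
      | succ k => exact hstep k
    obtain ⟨i, hi⟩ := ha.2 (fun n : ℕ => Nat.casesOn n a η) rfl hsteps
    cases i with
    | zero => exact ha2 hi
    | succ k => exact (hval k).2 hi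
  have hStarFwd : ∀ z, z ∈ P₁ → z ∉ P₂ → z ∉ F.Ep P₁ P₂ →
      (F.star z ∈ P₁ ∧ F.star z ∉ P₂) ∧ F.star z ∉ F.Ep P₁ P₂ := by
    intro z h1 h2 hE
    by_cases hz : z = F.star z
    · exact ⟨⟨hz ▸ h1, hz ▸ h2⟩, hz ▸ hE⟩
    obtain ⟨η, h0, hstep, hval⟩ := hnotE z h1 h2 hE
    have h1' : η 1 = F.star z := by
      have := hstep 0
      rw [h0, aux_pi_ne F hz, Set.mem_singleton_iff] at this
      exact this
    refine ⟨⟨h1' ▸ (hval 1).1, h1' ▸ (hval 1).2⟩, fun hcE => ?_⟩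
    obtain ⟨i, hi⟩ := hcE.2 (fun n => η (n + 1)) h1' (fun n => hstep (n + 1))
    exact (hval (i + 1)).2 hi
  have hmclassP : ∀ v, v ∈ P₁ → v ∉ P₂ → F.star v ∈ P₁ → F.star v ∉ P₂ →
      F.mclass v ⊆ P₁ \ P₂ := by
    intro v h1 h2 hs1 hs2 w hw
    have hws : F.star w = F.star v := aux_star_eq F hw
    have hle : L.le w (F.star v) := hws ▸ aux_le_star F w
    have hw1 : w ∈ P₁ := aux_closed_mem hCl1 hs1 hle
    refine ⟨hw1, fun hw2 => ?_⟩
    by_cases hwv : w = F.star v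
    · exact hs2 (hwv ▸ hw2)
    · have hne : w ≠ F.star w := by rw [hws]; exact hwv
      have hmem : F.star v ∈ F.Pi w := by rw [aux_pi_ne F hne, hws]; exact rfl
      exact hs2 (hIP1 w hw2 (F.star v) hmem hs1)
  have hglue : ∀ ψ : ℤ → X, (∀ i, ψ (i + 1) ∈ F.Pi (ψ i)) → ∀ η : ℕ → X,
      (∀ i, η (i + 1) ∈ F.Pi (η i)) → η 0 ∈ F.Pi (ψ 0) →
      ∃ φ : ℤ → X, (∀ i, φ (i + 1) ∈ F.Pi (φ i)) ∧ (∀ i : ℤ, i ≤ 0 → φ i = ψ i) ∧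
        ∀ n : ℕ, φ ((n : ℤ) + 1) = η n := by
    intro ψ hψ η hη h0
    refine ⟨fun i => if i ≤ 0 then ψ i else η (i - 1).toNat, fun i => ?_,
      fun i hi => by simp [hi], fun n => ?_⟩
    · show (if i + 1 ≤ 0 then ψ (i + 1) else η (i + 1 - 1).toNat) ∈
        F.Pi (if i ≤ 0 then ψ i else η (i - 1).toNat)
      by_cases h : i + 1 ≤ 0
      · rw [if_pos h, if_pos (by omega : i ≤ 0)]
        exact hψ i
      · rw [if_neg h]
        by_cases h2 : i ≤ 0
        · have hi0 : i = 0 := by omega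
          subst hi0
          rw [if_pos le_rfl, show ((0 : ℤ) + 1 - 1).toNat = 0 by omega]
          exact h0
        · rw [if_neg h2, show (i + 1 - 1).toNat = (i - 1).toNat + 1 by omega]
          exact hη _
    · show (if (n : ℤ) + 1 ≤ 0 then ψ ((n : ℤ) + 1) else η ((n : ℤ) + 1 - 1).toNat) = η n
      rw [if_neg (by omega : ¬ ((n : ℤ) + 1 ≤ 0)),
        show ((n : ℤ) + 1 - 1).toNat = n by omega]
  have hkey : ∀ z, z ∈ P₁ → z ∉ P₂ → z ∉ F.Ep P₁ P₂ →
      ∀ s ∈ S, z ∈ F.Pi (F.star s) → z ∈ S := by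
    intro z hz1 hz2 hzE s hsS hzPi
    have hstarS : F.star s ∈ S := hScompat s hsS (aux_star_spec F s).1
    obtain ⟨ψ, hψstep, hψ0, hψval⟩ := hSsol (F.star s) hstarS
    rw [aux_star_star F s] at hψ0
    obtain ⟨η, hη0, hηstep, hηval⟩ := hnotE z hz1 hz2 hzE
    have h0 : η 0 ∈ F.Pi (ψ 0) := by rw [hη0, hψ0]; exact hzPi
    obtain ⟨φ, hφstep, hφneg, hφpos⟩ := hglue ψ hψstep η hηstep h0
    have hφS : ∀ i : ℤ, i ≤ 0 → φ i ∈ S := by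
      intro i hi
      rw [hφneg i hi]
      have := hψval i
      simp only [MVField.lowerC, Set.mem_sep_iff] at this
      exact this.1
    have hval : ∀ i : ℤ, φ i ∈ P₁ \ P₂ := by
      intro i
      by_cases hi : i ≤ 0
      · exact hSP (hφS i hi)
      · obtain ⟨n, rfl⟩ : ∃ n : ℕ, i = (n : ℤ) + 1 := ⟨(i - 1).toNat, by omega⟩
        rw [hφpos n]
        exact hηval n
    have hstarval : ∀ i : ℤ, F.star (φ i) ∈ P₁ \ P₂ := by
      intro i
      by_cases hface : φ i = F.star (φ i)
      · rw [← hface]; exact hval i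
      · have := hφstep i
        rw [aux_pi_ne F hface, Set.mem_singleton_iff] at this
        rw [← this]
        exact hval (i + 1)
    have hlower : ∀ i : ℤ, φ i ∈ F.lowerC (P₁ \ P₂) := by
      intro i
      have hm := hmclassP (φ i) (hval i).1 (hval i).2 (hstarval i).1 (hstarval i).2
      simp only [MVField.lowerC, Set.mem_sep_iff]
      exact ⟨hval i, hm⟩
    have hthrough : ∃ i : ℤ, φ i = F.star z := by
      by_cases hzz : z = F.star z
      · exact ⟨1, by rw [show (1 : ℤ) = ((0 : ℕ) : ℤ) + 1 by norm_num, hφpos 0, hη0, ← hzz]⟩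
      · refine ⟨2, ?_⟩
        have h1 := hηstep 0
        rw [hη0, aux_pi_ne F hzz, Set.mem_singleton_iff] at h1
        rw [show (2 : ℤ) = ((1 : ℕ) : ℤ) + 1 by norm_num, hφpos 1, h1]
    rw [hSdef]
    simp only [MVField.InvPartIn, MVField.FullSolThroughIn, MVField.IsSolIn, MVField.PiIn,
      Set.inter_univ, Set.mem_sep_iff]
    exact ⟨⟨hz1, hz2⟩, φ, hφstep, hthrough, hlower⟩
  have hPiS : ∀ x ∈ S, ∀ y ∈ F.Pi x, y ∈ S ∪ F.Ep P₁ P₂ := by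
    intro x hxS y hy
    by_cases hxs : x = F.star x
    · have hy1 : y ∈ P₁ := hexit x (hSP hxS).1 (hSP hxS).2 y hy
      by_cases hy2 : y ∈ P₂
      · exact Or.inr (hP2E hy2)
      by_cases hyE : y ∈ F.Ep P₁ P₂
      · exact Or.inr hyE
      · exact Or.inl (hkey y hy1 hy2 hyE x hxS (by rw [← hxs]; exact hy))
    · rw [aux_pi_ne F hxs, Set.mem_singleton_iff] at hy
      exact Or.inl (hy ▸ hScompat x hxS (aux_star_spec F x).1)
  have hleE : ∀ a ∈ F.Ep P₁ P₂, ∀ z, L.le z a → z ∈ F.Ep P₁ P₂ := by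
    intro a ha z hle
    have hz1 : z ∈ P₁ := aux_closed_mem hCl1 (hEP1 ha) hle
    by_cases hz2 : z ∈ P₂
    · exact hP2E hz2
    by_contra hzE
    obtain ⟨⟨hs1, hs2⟩, hsE⟩ := hStarFwd z hz1 hz2 hzE
    have hstaraE : F.star a ∈ P₁ → F.star a ∈ F.Ep P₁ P₂ := by
      intro hsa1
      by_cases haa : a = F.star a
      · exact haa ▸ ha
      · have hmem : F.star a ∈ F.Pi a := by rw [aux_pi_ne F haa]; exact rfl
        by_cases ha2 : a ∈ P₂
        · exact hP2E (hIP1 a ha2 _ hmem hsa1)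
        · exact hC1 a ha _ hmem hsa1
    by_cases hzm : z ∈ F.mclass a
    · have heq : F.star z = F.star a := aux_star_eq F hzm
      have h' : F.star a ∈ F.Ep P₁ P₂ := hstaraE (heq ▸ hs1)
      rw [← heq] at h'
      exact hsE h'
    · by_cases hsa : F.star a ∈ P₁
      · have haE := hstaraE hsa
        have hzPi : z ∈ F.Pi (F.star a) :=
          aux_mem_pi_star F (Relation.ReflTransGen.trans hle (aux_le_star F a)) hzm
        exact hzE (hC1 _ haE z hzPi hz1)
      · by_cases haa : a = F.star a
        · exact hsa (haa ▸ hEP1 ha)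
        by_cases ha2 : a ∈ P₂
        · exact hz2 (aux_closed_mem hCl2 ha2 hle)
        · exact hsa (hexit a (hEP1 ha) ha2 _ (by rw [aux_pi_ne F haa]; exact rfl))
  have hleS : ∀ a ∈ S, ∀ z, L.le z a → z ∈ S ∪ F.Ep P₁ P₂ := by
    intro a ha z hle
    have hz1 : z ∈ P₁ := aux_closed_mem hCl1 (hSP ha).1 hle
    by_cases hz2 : z ∈ P₂
    · exact Or.inr (hP2E hz2)
    by_cases hzE : z ∈ F.Ep P₁ P₂
    · exact Or.inr hzE
    by_cases hzm : z ∈ F.mclass a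
    · exact Or.inl (hScompat a ha hzm)
    · exact Or.inl (hkey z hz1 hz2 hzE a ha
        (aux_mem_pi_star F (Relation.ReflTransGen.trans hle (aux_le_star F a)) hzm))
  have hsubsetCls : ∀ A : Set X, A ⊆ L.cls A :=
    fun A z hz => ⟨z, hz, Relation.ReflTransGen.refl⟩
  have hclSE : L.Closed (S ∪ F.Ep P₁ P₂) := by
    refine Set.Subset.antisymm ?_ (hsubsetCls _)
    rintro z ⟨a, ha, hle⟩
    cases ha with
    | inl h => exact hleS a h z hle
    | inr h => exact Or.inr (hleE a h z hle)
  have hclE : L.Closed (F.Ep P₁ P₂) := by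
    refine Set.Subset.antisymm ?_ (hsubsetCls _)
    rintro z ⟨a, ha, hle⟩
    exact hleE a ha z hle
  have hgoal3 : (S ∪ F.Ep P₁ P₂) \ F.Ep P₁ P₂ = S := by
    ext x
    constructor
    · rintro ⟨hx, hxE⟩
      exact hx.resolve_right hxE
    · intro hx
      exact ⟨Or.inl hx, hnotES x hx⟩
  have hInv1 : S = F.InvPartIn Set.univ ((S ∪ F.Ep P₁ P₂) \ P₂) := by
    apply Set.Subset.antisymm
    · intro x hx
      obtain ⟨ψ, hstep, h0, hval⟩ := hSsol x hx
      simp only [MVField.InvPartIn, MVField.FullSolThroughIn, MVField.IsSolIn, MVField.PiIn,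
        Set.inter_univ, Set.mem_sep_iff]
      refine ⟨⟨Or.inl hx, (hSP hx).2⟩, ψ, hstep, ⟨0, h0⟩, fun i => ?_⟩
      have := hval i
      simp only [MVField.lowerC, Set.mem_sep_iff] at this ⊢
      refine ⟨⟨Or.inl this.1, (hSP this.1).2⟩, fun w hw => ?_⟩
      have hwS := this.2 hw
      exact ⟨Or.inl hwS, (hSP hwS).2⟩
    · intro x hx
      simp only [MVField.InvPartIn, MVField.FullSolThroughIn, MVField.IsSolIn, MVField.PiIn,
        Set.inter_univ, Set.mem_sep_iff] at hx
      obtain ⟨⟨hxSE, hx2⟩, φ, hstep, hth, hval⟩ := hx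
      rw [hSdef]
      simp only [MVField.InvPartIn, MVField.FullSolThroughIn, MVField.IsSolIn, MVField.PiIn,
        Set.inter_univ, Set.mem_sep_iff]
      refine ⟨⟨hSE1 hxSE, hx2⟩, φ, hstep, hth, fun i => ?_⟩
      have := hval i
      simp only [MVField.lowerC, Set.mem_sep_iff] at this ⊢
      exact ⟨⟨hSE1 this.1.1, this.1.2⟩, fun w hw => ⟨hSE1 (this.2 hw).1, (this.2 hw).2⟩⟩
  have hInv2 : S = F.InvPartIn Set.univ ((S ∪ F.Ep P₁ P₂) \ F.Ep P₁ P₂) := by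
    rw [hgoal3]
    exact hS1.symm
  have hIP1' : ∀ x ∈ P₂, ∀ y ∈ F.Pi x, y ∈ S ∪ F.Ep P₁ P₂ → y ∈ P₂ :=
    fun x hx y hy hySE => hIP1 x hx y hy (hSE1 hySE)
  have hIP2' : ∀ x ∈ S ∪ F.Ep P₁ P₂, (∃ y ∈ F.Pi x, y ∉ S ∪ F.Ep P₁ P₂) → x ∈ P₂ := by
    rintro x hx ⟨y, hy, hyn⟩
    cases hx with
    | inl h => exact absurd (hPiS x h y hy) hyn
    | inr h =>
      by_cases hx2 : x ∈ P₂
      · exact hx2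
      · exact absurd (Or.inr (hC1 x h y hy (hexit x (hEP1 h) hx2 y hy))) hyn
  have hIP1'' : ∀ x ∈ F.Ep P₁ P₂, ∀ y ∈ F.Pi x, y ∈ S ∪ F.Ep P₁ P₂ → y ∈ F.Ep P₁ P₂ :=
    fun x hx y hy hySE => hC1 x hx y hy (hSE1 hySE)
  have hIP2'' : ∀ x ∈ S ∪ F.Ep P₁ P₂, (∃ y ∈ F.Pi x, y ∉ S ∪ F.Ep P₁ P₂) → x ∈ F.Ep P₁ P₂ := by
    rintro x hx ⟨y, hy, hyn⟩
    cases hx with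
    | inl h => exact absurd (hPiS x h y hy) hyn
    | inr h => exact h
  exact ⟨⟨hclSE, hCl2, fun x hx => Or.inr (hP2E hx), hIP1', hIP2', hInv1⟩,
    ⟨hclSE, hclE, fun x hx => Or.inr hx, hIP1'', hIP2'', hInv2⟩, hgoal3⟩
end

section
/- Let X be a Lefschetz complex over a ring R with unity, let 𝒱 be a multivector field on X with X invariant, and let P ⊆ Q be semi-equal index pairs for an isolated invariant set S (i.e. P₁ ⊆ Q₁, P₂ ⊆ Q₂, and either P₁ = Q₁ or P₂ = Q₂). Then H^κ(P₁,P₂) and H^κ(Q₁,Q₂) are isomorphic. -/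
open scoped Classical

/-!
Both `P₁ \ P₂` and `Q₁ \ Q₂` are `𝒱`-compatible with invariant part `S`. If `P₁ = Q₁`, then
`Q₂ \ P₂` is closed in `P₁ \ P₂` with complement `Q₁ \ Q₂`; if `P₂ = Q₂`, then `P₁ \ P₂` is
closed in `Q₁ \ Q₂` with complement `Q₁ \ P₁`. In both cases the piece `A` to be discarded is the
difference of the two compatible sets, so `Π_𝒱` has no periodic path in `A`: it would be a full
solution in one of them, hence lie in `S`, hence in the other. So every multivector of `A` is
regular (a critical one is a fixed point), and removing a multivector of `A` minimal for the flow,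
which is closed in `A`, shows `H^κ(A) = 0` by induction, using the long exact sequence of a pair.
The same sequence then turns `H^κ(A) = 0` into the isomorphism.
-/

theorem Relation.exists_int_chain_of_forall_exists {α : Type*} {r : α → α → Prop} {C : Set α}
    (hsucc : ∀ b ∈ C, ∃ c ∈ C, r b c) (hpred : ∀ b ∈ C, ∃ c ∈ C, r c b) {a : α} (ha : a ∈ C) :
    ∃ φ : ℤ → α, φ 0 = a ∧ ∀ i, r (φ i) (φ (i + 1)) := by
  choose succ hsuccC hsucc using hsucc
  choose pred hpredC hpred using hpred
  let fwd : ℕ → C := fun n => (fun b : C => ⟨succ b b.2, hsuccC b b.2⟩)^[n] ⟨a, ha⟩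
  let bwd : ℕ → C := fun n => (fun b : C => ⟨pred b b.2, hpredC b b.2⟩)^[n] ⟨a, ha⟩
  refine ⟨fun i => if 0 ≤ i then fwd i.toNat else bwd (-i).toNat, by simp [fwd], fun i => ?_⟩
  beta_reduce
  rcases le_or_gt 0 i with hi | hi
  · rw [if_pos hi, if_pos (by omega), show (i + 1).toNat = i.toNat + 1 by omega]
    simp only [fwd, Function.iterate_succ_apply']
    exact hsucc _ _
  · rw [if_neg (not_le.mpr hi), show (-i).toNat = (-(i + 1)).toNat + 1 by omega]
    simp only [bwd, Function.iterate_succ_apply']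
    split_ifs with hi'
    · -- at `i = -1` the two halves meet at `φ 0 = a`
      obtain rfl : i = -1 := by omega
      exact hpred _ _
    · exact hpred _ _

theorem Relation.TransGen.exists_int_chain {α : Type*} {r : α → α → Prop} {a : α}
    (h : TransGen r a a) : ∃ φ : ℤ → α, φ 0 = a ∧ ∀ i, r (φ i) (φ (i + 1)) := by
  refine exists_int_chain_of_forall_exists (C := {b | TransGen r a b ∧ TransGen r b a})
    (fun b hb => ?_) (fun b hb => ?_) ⟨h, h⟩
  · obtain ⟨c, hbc, hca⟩ := TransGen.head'_iff.mp hb.2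
    exact ⟨c, ⟨hb.1.tail hbc, TransGen.trans_right hca h⟩, hbc⟩
  · obtain ⟨c, hac, hcb⟩ := TransGen.tail'_iff.mp hb.1
    exact ⟨c, ⟨TransGen.trans_left h hac, TransGen.head hcb hb.2⟩, hcb⟩

theorem LinearMap.nonempty_subquotient_linearEquiv {R M N : Type*} [Ring R] [AddCommGroup M]
    [Module R M] [AddCommGroup N] [Module R N] (φ : M →ₗ[R] N) {Z₁ B₁ : Submodule R M}
    {Z₂ B₂ : Submodule R N} (hZ : Z₁ ≤ Z₂.comap φ) (hB : B₁ ≤ B₂.comap φ)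
    (hsurj : ∀ z ∈ Z₂, ∃ z' ∈ Z₁, φ z' - z ∈ B₂) (hinj : ∀ z ∈ Z₁, φ z ∈ B₂ → z ∈ B₁) :
    Nonempty ((Z₁ ⧸ B₁.comap Z₁.subtype) ≃ₗ[R] (Z₂ ⧸ B₂.comap Z₂.subtype)) := by
  let ψ : Z₁ →ₗ[R] Z₂ := (φ ∘ₗ Z₁.subtype).codRestrict Z₂ fun z => hZ z.2
  have hψ : B₁.comap Z₁.subtype ≤ (B₂.comap Z₂.subtype).comap ψ := fun z hz => hB hz
  refine ⟨LinearEquiv.ofBijective (Submodule.mapQ _ _ ψ hψ) ⟨?_, ?_⟩⟩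
  · rw [← LinearMap.ker_eq_bot, Submodule.eq_bot_iff]
    intro q h
    obtain ⟨⟨z, hz⟩, rfl⟩ := Submodule.Quotient.mk_surjective _ q
    rw [LinearMap.mem_ker, Submodule.mapQ_apply, Submodule.Quotient.mk_eq_zero] at h
    exact (Submodule.Quotient.mk_eq_zero _).mpr (hinj z hz h)
  · intro q
    obtain ⟨⟨z, hz⟩, rfl⟩ := Submodule.Quotient.mk_surjective _ q
    obtain ⟨z', hz', hdiff⟩ := hsurj z hz
    exact ⟨Submodule.Quotient.mk ⟨z', hz'⟩, (Submodule.Quotient.eq _).mpr hdiff⟩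

namespace CMVF

noncomputable def indicatorLinearMap {R X : Type*} [Ring R] (D : Set X) :
    (X → R) →ₗ[R] (X → R) where
  toFun := D.indicator
  map_add' := Set.indicator_add' D
  map_smul' := Set.indicator_const_smul D

@[simp]
theorem indicatorLinearMap_apply {R X : Type*} [Ring R] (D : Set X) (f : X → R) :
    indicatorLinearMap D f = D.indicator f := rfl

theorem indicator_diff_eq_zero {M X : Type*} [Zero M] {A B : Set X} {f : X → M}
    (hf : Function.support f ⊆ B) : (A \ B).indicator f = 0 :=
  Set.indicator_eq_zero'.mpr (Set.disjoint_of_subset_left hf Set.disjoint_sdiff_right)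

variable {R : Type*} [Ring R] {X : Type*} [Fintype X]

namespace Lefschetz

variable (L : Lefschetz R X)

theorem bd_apply (A : Set X) (f : X → R) (y : X) :
    L.bd A f y = if y ∈ A then ∑ x, (if x ∈ A then f x * L.κ x y else 0) else 0 := rfl

def ClosedIn (B A : Set X) : Prop :=
  B ⊆ A ∧ ∀ x ∈ B, ∀ y, L.κ x y ≠ 0 → y ∈ A → y ∈ B

def FacetConvex (A : Set X) : Prop :=
  ∀ x ∈ A, ∀ y, L.κ x y ≠ 0 → y ∉ A → ∀ z, L.κ y z ≠ 0 → z ∉ A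

variable {L}

theorem mem_chainGroup_iff {A : Set X} {n : ℕ} {f : X → R} :
    f ∈ L.chainGroup A n ↔ ∀ x, f x ≠ 0 → x ∈ A ∧ L.dim x = n := by
  constructor
  · intro hf
    induction hf using Submodule.span_induction with
    | mem g hg =>
      obtain ⟨x, hx, hdim, rfl⟩ := hg
      intro y hy
      obtain rfl : y = x := by by_contra hne; simp [hne] at hy
      exact ⟨hx, hdim⟩
    | zero => simp
    | add g g' _ _ hg hg' =>
      intro x hx
      by_cases h : g x = 0
      · exact hg' x (by simpa [h] using hx)
      · exact hg x h
    | smul c g _ hg => exact fun x hx => hg x (right_ne_zero_of_mul hx)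
  · intro hf
    rw [pi_eq_sum_univ' f]
    refine Submodule.sum_mem _ fun x _ => ?_
    by_cases hx : f x = 0
    · simp [hx]
    · exact Submodule.smul_mem _ _ (Submodule.subset_span ⟨x, (hf x hx).1, (hf x hx).2, rfl⟩)

theorem chainGroup_mono {B A : Set X} (h : B ⊆ A) (n : ℕ) : L.chainGroup B n ≤ L.chainGroup A n :=
  fun _ hf => mem_chainGroup_iff.mpr fun x hx =>
    ⟨h (mem_chainGroup_iff.mp hf x hx).1, (mem_chainGroup_iff.mp hf x hx).2⟩

theorem support_subset_of_mem_chainGroup {A : Set X} {n : ℕ} {f : X → R}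
    (hf : f ∈ L.chainGroup A n) : Function.support f ⊆ A :=
  fun x hx => (mem_chainGroup_iff.mp hf x hx).1

theorem indicator_mem_chainGroup {A : Set X} {n : ℕ} {f : X → R} (D : Set X)
    (hf : f ∈ L.chainGroup A n) : D.indicator f ∈ L.chainGroup D n := by
  refine mem_chainGroup_iff.mpr fun x hx => ?_
  have hxD := Set.mem_of_indicator_ne_zero hx
  rw [Set.indicator_of_mem hxD] at hx
  exact ⟨hxD, (mem_chainGroup_iff.mp hf x hx).2⟩

theorem mem_chainGroup_of_indicator_diff_eq_zero {B A : Set X} {n : ℕ} {f : X → R}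
    (hf : f ∈ L.chainGroup A n) (h : (A \ B).indicator f = 0) : f ∈ L.chainGroup B n := by
  refine mem_chainGroup_iff.mpr fun x hx => ⟨?_, (mem_chainGroup_iff.mp hf x hx).2⟩
  by_contra hxB
  have := congrFun h x
  rw [Set.indicator_of_mem (show x ∈ A \ B from ⟨(mem_chainGroup_iff.mp hf x hx).1, hxB⟩),
    Pi.zero_apply] at this
  exact hx this

theorem bd_mem_chainGroup {A : Set X} {n : ℕ} {f : X → R}
    (hf : f ∈ L.chainGroup A (n + 1)) : L.bd A f ∈ L.chainGroup A n := by
  refine mem_chainGroup_iff.mpr fun y hy => ?_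
  rw [bd_apply] at hy
  split_ifs at hy with hyA
  · obtain ⟨x, -, hx⟩ := Finset.exists_ne_zero_of_sum_ne_zero hy
    split_ifs at hx with hxA
    swap; · exact absurd rfl hx
    have hdim := (mem_chainGroup_iff.mp hf x (left_ne_zero_of_mul hx)).2
    have := L.dim_facet x y (right_ne_zero_of_mul hx)
    exact ⟨hyA, by omega⟩
  · exact absurd rfl hy

theorem bd_eq_zero_of_mem_chainGroup_zero {A : Set X} {f : X → R}
    (hf : f ∈ L.chainGroup A 0) : L.bd A f = 0 := by
  funext y
  refine (bd_apply ..).trans (ite_eq_right_iff.mpr fun _ => Finset.sum_eq_zero fun x _ => ?_)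
  split_ifs
  swap; · rfl
  by_contra hx
  have hdim := (mem_chainGroup_iff.mp hf x (left_ne_zero_of_mul hx)).2
  have := L.dim_facet x y (right_ne_zero_of_mul hx)
  omega

theorem mem_cycles_iff {A : Set X} {n : ℕ} {f : X → R} :
    f ∈ L.cycles A n ↔ f ∈ L.chainGroup A n ∧ L.bd A f = 0 := by
  rw [cycles, Submodule.mem_inf, LinearMap.mem_ker]

theorem mem_boundaries_iff {A : Set X} {n : ℕ} {f : X → R} :
    f ∈ L.boundaries A n ↔ ∃ g ∈ L.chainGroup A (n + 1), L.bd A g = f :=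
  Submodule.mem_map

theorem bd_mem_boundaries {A : Set X} {n : ℕ} {g : X → R} (hg : g ∈ L.chainGroup A (n + 1)) :
    L.bd A g ∈ L.boundaries A n :=
  mem_boundaries_iff.mpr ⟨g, hg, rfl⟩

theorem homologyZero_iff {A : Set X} :
    L.HomologyZero A ↔ ∀ n, L.cycles A n ≤ L.boundaries A n := by
  refine forall_congr' fun n => ?_
  rw [homology, Submodule.Quotient.subsingleton_iff, Submodule.comap_subtype_eq_top]

theorem homologyZero_empty : L.HomologyZero ∅ := by
  refine homologyZero_iff.mpr fun n f hf => ?_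
  have : f = 0 := Function.support_eq_empty_iff.mp
    (Set.subset_empty_iff.mp (support_subset_of_mem_chainGroup (mem_cycles_iff.mp hf).1))
  exact this ▸ Submodule.zero_mem _

theorem FacetConvex.bd_bd {A : Set X} (hA : L.FacetConvex A) (f : X → R) :
    L.bd A (L.bd A f) = 0 := by
  funext z
  rw [bd_apply, Pi.zero_apply]
  split_ifs with hz
  swap; · rfl
  calc ∑ y, (if y ∈ A then L.bd A f y * L.κ y z else (0 : R))
      = ∑ y, ∑ x, if x ∈ A then f x * (L.κ x y * L.κ y z) else 0 := by
        refine Finset.sum_congr rfl fun y _ => ?_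
        by_cases hy : y ∈ A
        · simp only [hy, if_true, bd_apply, Finset.sum_mul]
          refine Finset.sum_congr rfl fun x _ => ?_
          split_ifs <;> simp [mul_assoc]
        · rw [if_neg hy]
          refine (Finset.sum_eq_zero fun x _ => ?_).symm
          split_ifs with hx
          swap; · rfl
          by_cases hxy : L.κ x y = 0
          · simp [hxy]
          by_cases hyz : L.κ y z = 0
          · simp [hyz]
          exact absurd hz (hA x hx y hxy hy z hyz)
    _ = ∑ x, if x ∈ A then f x * ∑ y, L.κ x y * L.κ y z else 0 := by
        rw [Finset.sum_comm]
        refine Finset.sum_congr rfl fun x _ => ?_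
        split_ifs <;> simp [Finset.mul_sum]
    _ = 0 := by simp [L.κ_sq]

namespace ClosedIn

variable {B A : Set X} {n : ℕ} {f : X → R}

theorem κ_eq_zero (h : L.ClosedIn B A) {x y : X} (hx : x ∈ B) (hy : y ∈ A \ B) : L.κ x y = 0 :=
  by_contra fun hxy => hy.2 (h.2 x hx y hxy hy.1)

theorem bd_eq (h : L.ClosedIn B A) (hf : Function.support f ⊆ B) :
    L.bd A f = L.bd B f := by
  have hterm : ∀ y x,
      (if x ∈ A then f x * L.κ x y else 0) = if x ∈ B then f x * L.κ x y else 0 := by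
    intro y x
    by_cases hfx : f x = 0
    · simp [hfx]
    · simp [hf hfx, h.1 (hf hfx)]
  funext y
  simp only [bd_apply, hterm]
  by_cases hyB : y ∈ B
  · simp [hyB, h.1 hyB]
  rw [if_neg hyB]
  split_ifs with hyA
  swap; · rfl
  refine Finset.sum_eq_zero fun x _ => ?_
  split_ifs with hxB
  · rw [h.κ_eq_zero hxB ⟨hyA, hyB⟩, mul_zero]
  · rfl

theorem indicator_bd (h : L.ClosedIn B A) (f : X → R) :
    (A \ B).indicator (L.bd A f) = L.bd (A \ B) ((A \ B).indicator f) := by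
  funext y
  rw [bd_apply, Set.indicator_apply]
  split_ifs with hy
  swap; · rfl
  rw [bd_apply, if_pos hy.1]
  refine Finset.sum_congr rfl fun x _ => ?_
  by_cases hxD : x ∈ A \ B
  · simp [hxD, hxD.1]
  · by_cases hxA : x ∈ A
    · rw [if_pos hxA, if_neg hxD, h.κ_eq_zero (by_contra fun hxB => hxD ⟨hxA, hxB⟩) hy, mul_zero]
    · rw [if_neg hxA, if_neg hxD]

theorem cycles_le (h : L.ClosedIn B A) (n : ℕ) : L.cycles B n ≤ L.cycles A n := fun f hf => by
  obtain ⟨hfc, hbd⟩ := mem_cycles_iff.mp hf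
  exact mem_cycles_iff.mpr ⟨chainGroup_mono h.1 n hfc,
    (h.bd_eq (support_subset_of_mem_chainGroup hfc)).trans hbd⟩

theorem boundaries_le (h : L.ClosedIn B A) (n : ℕ) : L.boundaries B n ≤ L.boundaries A n :=
  fun f hf => by
  obtain ⟨g, hg, rfl⟩ := mem_boundaries_iff.mp hf
  rw [← h.bd_eq (support_subset_of_mem_chainGroup hg)]
  exact bd_mem_boundaries (chainGroup_mono h.1 _ hg)

theorem mem_cycles_of_bd_eq_zero (h : L.ClosedIn B A) (hf : f ∈ L.chainGroup B n)
    (hbd : L.bd A f = 0) : f ∈ L.cycles B n :=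
  mem_cycles_iff.mpr ⟨hf, (h.bd_eq (support_subset_of_mem_chainGroup hf)).symm.trans hbd⟩

theorem indicator_mem_cycles (h : L.ClosedIn B A) (hf : f ∈ L.cycles A n) :
    (A \ B).indicator f ∈ L.cycles (A \ B) n := by
  obtain ⟨hfc, hbd⟩ := mem_cycles_iff.mp hf
  refine mem_cycles_iff.mpr ⟨indicator_mem_chainGroup _ hfc, ?_⟩
  rw [← h.indicator_bd, hbd, Set.indicator_zero']

theorem indicator_mem_boundaries (h : L.ClosedIn B A) (hf : f ∈ L.boundaries A n) :
    (A \ B).indicator f ∈ L.boundaries (A \ B) n := by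
  obtain ⟨g, hg, rfl⟩ := mem_boundaries_iff.mp hf
  rw [h.indicator_bd]
  exact bd_mem_boundaries (indicator_mem_chainGroup _ hg)

/-- Exactness of `0 → C(B) → C(A) → C(A \ B) → 0` at `C(A)`, modulo boundaries of `A \ B`. -/
theorem exists_sub_bd_mem_chainGroup (h : L.ClosedIn B A) (hf : f ∈ L.chainGroup A n)
    (hfD : (A \ B).indicator f ∈ L.boundaries (A \ B) n) :
    ∃ w ∈ L.chainGroup A (n + 1), f - L.bd A w ∈ L.chainGroup B n := by
  obtain ⟨w, hw, hwf⟩ := mem_boundaries_iff.mp hfD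
  have hwA := chainGroup_mono Set.sdiff_subset _ hw
  refine ⟨w, hwA, mem_chainGroup_of_indicator_diff_eq_zero
    (Submodule.sub_mem _ hf (bd_mem_chainGroup hwA)) ?_⟩
  rw [Set.indicator_sub', h.indicator_bd,
    Set.indicator_eq_self.mpr (support_subset_of_mem_chainGroup hw), hwf, sub_self]

theorem exists_mem_cycles_sub_mem_boundaries (h : L.ClosedIn B A)
    (hA : L.FacetConvex A) (hD : L.HomologyZero (A \ B)) (hf : f ∈ L.cycles A n) :
    ∃ f' ∈ L.cycles B n, f' - f ∈ L.boundaries A n := by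
  obtain ⟨hfc, hbd⟩ := mem_cycles_iff.mp hf
  obtain ⟨w, hw, hfw⟩ := h.exists_sub_bd_mem_chainGroup hfc
    (homologyZero_iff.mp hD n (h.indicator_mem_cycles hf))
  refine ⟨f - L.bd A w, h.mem_cycles_of_bd_eq_zero hfw (by rw [map_sub, hbd, hA.bd_bd, sub_zero]),
    ?_⟩
  rw [sub_sub_cancel_left, ← map_neg]
  exact bd_mem_boundaries (Submodule.neg_mem _ hw)

theorem mem_boundaries_of_mem_boundaries (h : L.ClosedIn B A) (hA : L.FacetConvex A)
    (hD : L.HomologyZero (A \ B))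
    (hf : f ∈ L.cycles B n) (hfA : f ∈ L.boundaries A n) : f ∈ L.boundaries B n := by
  obtain ⟨g, hg, rfl⟩ := mem_boundaries_iff.mp hfA
  have hgD : (A \ B).indicator g ∈ L.cycles (A \ B) (n + 1) := by
    refine mem_cycles_iff.mpr ⟨indicator_mem_chainGroup _ hg, ?_⟩
    rw [← h.indicator_bd]
    exact indicator_diff_eq_zero (support_subset_of_mem_chainGroup (mem_cycles_iff.mp hf).1)
  obtain ⟨w, -, hgw⟩ := h.exists_sub_bd_mem_chainGroup hg (homologyZero_iff.mp hD _ hgD)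
  rw [← sub_zero (L.bd A g), ← hA.bd_bd w, ← map_sub,
    h.bd_eq (support_subset_of_mem_chainGroup hgw)]
  exact bd_mem_boundaries hgw

theorem mem_boundaries_of_indicator_mem_boundaries (h : L.ClosedIn B A)
    (hA : L.FacetConvex A) (hB : L.HomologyZero B) (hf : f ∈ L.cycles A n)
    (hfD : (A \ B).indicator f ∈ L.boundaries (A \ B) n) : f ∈ L.boundaries A n := by
  obtain ⟨hfc, hbd⟩ := mem_cycles_iff.mp hf
  obtain ⟨w, hw, hfw⟩ := h.exists_sub_bd_mem_chainGroup hfc hfD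
  have hcyc : f - L.bd A w ∈ L.cycles B n :=
    h.mem_cycles_of_bd_eq_zero hfw (by rw [map_sub, hbd, hA.bd_bd, sub_zero])
  rw [← sub_add_cancel f (L.bd A w)]
  exact Submodule.add_mem _ (h.boundaries_le n (homologyZero_iff.mp hB n hcyc))
    (bd_mem_boundaries hw)

theorem exists_mem_cycles_indicator_eq (h : L.ClosedIn B A) (hA : L.FacetConvex A)
    (hB : L.HomologyZero B)
    (hf : f ∈ L.cycles (A \ B) n) : ∃ f' ∈ L.cycles A n, (A \ B).indicator f' = f := by
  obtain ⟨hfc, hbd⟩ := mem_cycles_iff.mp hf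
  have hfA := chainGroup_mono Set.sdiff_subset n hfc
  have hf_eq : (A \ B).indicator f = f :=
    Set.indicator_eq_self.mpr (support_subset_of_mem_chainGroup hfc)
  cases n with
  | zero => exact ⟨f, mem_cycles_iff.mpr ⟨hfA, bd_eq_zero_of_mem_chainGroup_zero hfA⟩, hf_eq⟩
  | succ n =>
    have hbdB : L.bd A f ∈ L.cycles B n := by
      refine h.mem_cycles_of_bd_eq_zero (mem_chainGroup_of_indicator_diff_eq_zero
        (bd_mem_chainGroup hfA) ?_) (hA.bd_bd f)
      rw [h.indicator_bd, hf_eq, hbd]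
    obtain ⟨s, hs, hsf⟩ := mem_boundaries_iff.mp (homologyZero_iff.mp hB n hbdB)
    have hsB := support_subset_of_mem_chainGroup hs
    refine ⟨f - s, mem_cycles_iff.mpr ⟨Submodule.sub_mem _ hfA (chainGroup_mono h.1 _ hs), ?_⟩, ?_⟩
    · rw [map_sub, h.bd_eq hsB, hsf, sub_self]
    · rw [Set.indicator_sub', hf_eq, indicator_diff_eq_zero hsB, sub_zero]

theorem nonempty_homology_equiv (h : L.ClosedIn B A) (hA : L.FacetConvex A)
    (hD : L.HomologyZero (A \ B)) (n : ℕ) :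
    Nonempty (L.homology B n ≃ₗ[R] L.homology A n) :=
  LinearMap.id.nonempty_subquotient_linearEquiv (h.cycles_le n) (h.boundaries_le n)
    (fun _ hf => h.exists_mem_cycles_sub_mem_boundaries hA hD hf)
    (fun _ hf hfA => h.mem_boundaries_of_mem_boundaries hA hD hf hfA)

theorem nonempty_homology_diff_equiv (h : L.ClosedIn B A) (hA : L.FacetConvex A)
    (hB : L.HomologyZero B) (n : ℕ) :
    Nonempty (L.homology A n ≃ₗ[R] L.homology (A \ B) n) :=
  (indicatorLinearMap (R := R) (A \ B)).nonempty_subquotient_linearEquiv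
    (fun _ hf => h.indicator_mem_cycles hf) (fun _ hf => h.indicator_mem_boundaries hf)
    (fun f hf => by
      obtain ⟨f', hf', rfl⟩ := h.exists_mem_cycles_indicator_eq hA hB hf
      exact ⟨f', hf', by rw [indicatorLinearMap_apply, sub_self]; exact Submodule.zero_mem _⟩)
    (fun _ hf hfD => h.mem_boundaries_of_indicator_mem_boundaries hA hB hf hfD)

theorem homologyZero (h : L.ClosedIn B A) (hA : L.FacetConvex A) (hB : L.HomologyZero B)
    (hD : L.HomologyZero (A \ B)) : L.HomologyZero A := fun n =>
  have := hB n
  (h.nonempty_homology_equiv hA hD n).some.symm.toEquiv.subsingleton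

end ClosedIn

theorem le_of_κ_ne_zero {x y : X} (h : L.κ x y ≠ 0) : L.le y x := Relation.ReflTransGen.single h

theorem Closed.mem_of_le {P : Set X} (hP : L.Closed P) {x y : X} (hx : x ∈ P) (h : L.le y x) :
    y ∈ P :=
  hP ▸ ⟨x, hx, h⟩

theorem Closed.facetConvex_diff {U V : Set X} (hU : L.Closed U) (hV : L.Closed V) :
    L.FacetConvex (U \ V) := by
  rintro x ⟨hxU, hxV⟩ y hxy hy z hyz ⟨-, hzV⟩
  have hyV : y ∈ V := by_contra fun hyV => hy ⟨hU.mem_of_le hxU (le_of_κ_ne_zero hxy), hyV⟩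
  exact hzV (hV.mem_of_le hyV (le_of_κ_ne_zero hyz))

theorem Closed.closedIn_diff {C U : Set X} (hC : L.Closed C) (hCU : C ⊆ U) (V : Set X) :
    L.ClosedIn (C \ V) (U \ V) :=
  ⟨Set.sdiff_subset_sdiff_left hCU, fun _ hx _ hxy hy =>
    ⟨hC.mem_of_le hx.1 (le_of_κ_ne_zero hxy), hy.2⟩⟩

theorem FacetConvex.diff_of_closedIn {B A : Set X} (hA : L.FacetConvex A) (h : L.ClosedIn B A) :
    L.FacetConvex (A \ B) := by
  rintro x ⟨hxA, hxB⟩ y hxy hy z hyz ⟨hzA, hzB⟩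
  by_cases hyA : y ∈ A
  · exact hzB (h.2 y (by_contra fun hyB => hy ⟨hyA, hyB⟩) z hyz hzA)
  · exact hA x hxA y hxy hyA z hyz hzA

end Lefschetz

namespace MVField

variable {L : Lefschetz R X} (F : MVField L)

theorem mem_mclass (x : X) : x ∈ F.mclass x := (F.mclass_spec x).2

theorem mclass_eq_of_mem {x y : X} (h : y ∈ F.mclass x) : F.mclass y = F.mclass x :=
  (F.cover y).unique (F.mclass_spec y) ⟨(F.mclass_spec x).1, h⟩

theorem star_spec (x : X) : F.star x ∈ F.mclass x ∧ ∀ z ∈ F.mclass x, L.le z (F.star x) :=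
  ((F.isMV _ (F.mclass_spec x).1).2).exists.choose_spec

theorem star_mem (x : X) : F.star x ∈ F.mclass x := (F.star_spec x).1

theorem le_star (x : X) : L.le x (F.star x) := (F.star_spec x).2 x (F.mem_mclass x)

theorem star_eq_of_mem {x y : X} (h : y ∈ F.mclass x) : F.star y = F.star x := by
  have hyx := F.mclass_eq_of_mem h
  refine ((F.isMV _ (F.mclass_spec x).1).2).unique ?_ (F.star_spec x)
  rw [← hyx]
  exact F.star_spec y

theorem star_star (x : X) : F.star (F.star x) = F.star x := F.star_eq_of_mem (F.star_mem x)

theorem Pi_of_ne_star {x : X} (h : x ≠ F.star x) : F.Pi x = {F.star x} := if_neg h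

theorem star_mem_Pi_star {x : X} (h : ¬ L.Regular (F.mclass x)) :
    F.star x ∈ F.Pi (F.star x) := by
  rw [Pi, if_pos (F.star_star x).symm, regPart, F.mclass_eq_of_mem (F.star_mem x), if_neg h,
    F.star_star]
  exact ⟨⟨_, rfl, Relation.ReflTransGen.refl⟩, fun h => h.2 rfl⟩

theorem mem_Pi_star {x w : X} (hw : w ∈ L.cls (F.mclass x)) (hwx : w ∉ F.mclass x) :
    w ∈ F.Pi (F.star x) := by
  obtain ⟨v, hv, hwv⟩ := hw
  have hreg : F.regPart (F.star x) ⊆ F.mclass x := by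
    rw [regPart, F.mclass_eq_of_mem (F.star_mem x)]
    split_ifs
    exacts [subset_rfl, Set.sdiff_subset]
  rw [Pi, if_pos (F.star_star x).symm]
  exact ⟨⟨_, rfl, hwv.trans ((F.star_spec x).2 v hv)⟩, fun h => hwx (hreg h)⟩

theorem compat_mclass (x : X) : F.Compat (F.mclass x) := fun _ hy =>
  (F.mclass_eq_of_mem hy).le

def StepIn (A : Set X) (a b : X) : Prop := b ∈ F.PiIn A a

variable {F}

theorem Compat.diff {A B : Set X} (hA : F.Compat A) (hB : F.Compat B) : F.Compat (A \ B) :=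
  fun x hx y hy => ⟨hA x hx.1 hy, fun hyB =>
    hx.2 (hB y hyB (F.mclass_eq_of_mem hy ▸ F.mem_mclass x))⟩

section IndexPair

variable {S P₁ P₂ : Set X}

theorem IndexPair.closed₁ (h : F.IndexPair S P₁ P₂) : L.Closed P₁ := h.1

theorem IndexPair.closed₂ (h : F.IndexPair S P₁ P₂) : L.Closed P₂ := h.2.1

theorem IndexPair.subset (h : F.IndexPair S P₁ P₂) : P₂ ⊆ P₁ := h.2.2.1

theorem IndexPair.eq_invPartIn (h : F.IndexPair S P₁ P₂) : S = F.InvPartIn Set.univ (P₁ \ P₂) :=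
  h.2.2.2.2.2

theorem IndexPair.mem_diff_iff_star_mem_diff (h : F.IndexPair S P₁ P₂) (x : X) :
    x ∈ P₁ \ P₂ ↔ F.star x ∈ P₁ \ P₂ := by
  obtain ⟨hP₁, hP₂, -, hP₂Pi, hP₁Pi, -⟩ := h
  by_cases hxs : x = F.star x
  · rw [← hxs]
  have hPi : F.star x ∈ F.Pi x := by rw [F.Pi_of_ne_star hxs]; rfl
  constructor
  · rintro ⟨hx₁, hx₂⟩
    exact ⟨by_contra fun hs => hx₂ (hP₁Pi x hx₁ ⟨_, hPi, hs⟩),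
      fun hs => hx₂ (hP₂.mem_of_le hs (F.le_star x))⟩
  · rintro ⟨hs₁, hs₂⟩
    exact ⟨hP₁.mem_of_le hs₁ (F.le_star x), fun hx₂ => hs₂ (hP₂Pi x hx₂ _ hPi hs₁)⟩

theorem IndexPair.compat_diff (h : F.IndexPair S P₁ P₂) : F.Compat (P₁ \ P₂) :=
  fun x hx y hy => by
  rwa [h.mem_diff_iff_star_mem_diff, F.star_eq_of_mem hy, ← h.mem_diff_iff_star_mem_diff]

end IndexPair

section StepIn

variable {A : Set X} {a b : X}

theorem mem_of_transGen_stepIn (hab : Relation.TransGen (F.StepIn A) a b) : b ∈ A := by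
  obtain ⟨_, -, hb⟩ := Relation.TransGen.tail'_iff.mp hab
  exact hb.2

theorem reflTransGen_stepIn_star (hA : F.Compat A) (hb : b ∈ A) :
    Relation.ReflTransGen (F.StepIn A) b (F.star b) := by
  by_cases hbs : b = F.star b
  · rw [← hbs]
  · exact .single ⟨by rw [F.Pi_of_ne_star hbs]; rfl, hA b hb (F.star_mem b)⟩

theorem star_mem_invPartIn_of_transGen {N : Set X} {x : X} (hAN : A ⊆ F.lowerC N)
    (hx : Relation.TransGen (F.StepIn A) (F.star x) (F.star x)) :
    F.star x ∈ F.InvPartIn Set.univ N := by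
  obtain ⟨φ, hφ0, hφ⟩ := hx.exists_int_chain
  have hφA : ∀ i, φ i ∈ A := fun i => by simpa using (hφ (i - 1)).2
  exact ⟨(hAN (mem_of_transGen_stepIn hx)).1, φ, fun i => ⟨(hφ i).1, trivial⟩,
    ⟨0, by rw [hφ0, F.star_star]⟩, fun i => hAN (hφA i)⟩

theorem closedIn_mclass_of_forall_not_transGen (hA : F.Compat A) {x : X} (hx : x ∈ A)
    (hmin : ∀ y ∈ A, ¬ Relation.TransGen (F.StepIn A) (F.star x) (F.star y)) :
    L.ClosedIn (F.mclass x) A := by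
  refine ⟨hA x hx, fun w hw y hwy hy => by_contra fun hyx => hmin y hy ?_⟩
  have hstep : F.StepIn A (F.star x) y :=
    ⟨F.mem_Pi_star ⟨w, hw, Lefschetz.le_of_κ_ne_zero hwy⟩ hyx, hy⟩
  exact Relation.TransGen.trans_left (.single hstep) (reflTransGen_stepIn_star hA hy)

theorem regular_of_not_transGen {x : X} (hx : F.star x ∈ A)
    (h : ¬ Relation.TransGen (F.StepIn A) (F.star x) (F.star x)) : L.Regular (F.mclass x) :=
  by_contra fun hreg => h (.single ⟨F.star_mem_Pi_star hreg, hx⟩)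

end StepIn

theorem homologyZero_of_forall_not_transGen {A : Set X} (hconv : L.FacetConvex A)
    (hA : F.Compat A) (hacyc : ∀ x, ¬ Relation.TransGen (F.StepIn A) (F.star x) (F.star x)) :
    L.HomologyZero A := by
  induction hn : A.ncard using Nat.strong_induction_on generalizing A with
  | _ n ih =>
  rcases A.eq_empty_or_nonempty with rfl | hne
  · exact Lefschetz.homologyZero_empty
  let r : X → X → Prop := fun y x => Relation.TransGen (F.StepIn A) (F.star x) (F.star y)
  have : IsTrans X r := ⟨fun _ _ _ h₁ h₂ => h₂.trans h₁⟩
  have : Std.Irrefl r := ⟨hacyc⟩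
  obtain ⟨x, hx, hmin⟩ := (Finite.wellFounded_of_trans_of_irrefl r).has_min A hne
  have hclosed := closedIn_mclass_of_forall_not_transGen hA hx hmin
  have hlt : (A \ F.mclass x).ncard < n :=
    hn ▸ Set.ncard_lt_ncard (Set.sdiff_ssubset_left_iff.mpr ⟨x, hx, F.mem_mclass x⟩)
  have hrest : L.HomologyZero (A \ F.mclass x) :=
    ih _ hlt (hconv.diff_of_closedIn hclosed) (hA.diff (F.compat_mclass x))
      (fun y hy => hacyc y (Relation.TransGen.mono (fun _ _ hab => ⟨hab.1, hab.2.1⟩) _ _ hy)) rfl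
  exact hclosed.homologyZero hconv
    (regular_of_not_transGen (hA x hx (F.star_mem x)) (hacyc x)) hrest

theorem homologyZero_diff_of_invPartIn_eq {E E' : Set X} (hE : F.Compat E) (hE' : F.Compat E')
    (hinv : F.InvPartIn Set.univ E = F.InvPartIn Set.univ E') (hconv : L.FacetConvex (E \ E')) :
    L.HomologyZero (E \ E') := by
  refine homologyZero_of_forall_not_transGen hconv (hE.diff hE') fun x hx => ?_
  have hxE : F.star x ∈ F.InvPartIn Set.univ E :=
    star_mem_invPartIn_of_transGen (fun y hy => ⟨hy.1, hE y hy.1⟩) hx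
  exact (mem_of_transGen_stepIn hx).2 (hinv ▸ hxE).1

end MVField

end CMVF

open CMVF

variable {R : Type*} [Ring R] {X : Type*} [Fintype X]

theorem semi_equal_index_pairs_general (L : Lefschetz R X) (F : MVField L)
    (S : Set X)
    (P₁ P₂ Q₁ Q₂ : Set X) (hP : F.IndexPair S P₁ P₂) (hQ : F.IndexPair S Q₁ Q₂)
    (h₁ : P₁ ⊆ Q₁) (h₂ : P₂ ⊆ Q₂) (hsemi : P₁ = Q₁ ∨ P₂ = Q₂) :
    ∀ k, Nonempty (L.homology (P₁ \ P₂) k ≃ₗ[R] L.homology (Q₁ \ Q₂) k) := by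
  intro k
  have hinv := hP.eq_invPartIn.symm.trans hQ.eq_invPartIn
  rcases hsemi with rfl | rfl
  · have hB : (P₁ \ P₂) \ (P₁ \ Q₂) = Q₂ \ P₂ := by
      ext x; have : x ∈ Q₂ → x ∈ P₁ := fun h => hQ.subset h; simp only [Set.mem_sdiff]; tauto
    have hD : (P₁ \ P₂) \ (Q₂ \ P₂) = P₁ \ Q₂ := by
      ext x; have : x ∈ P₂ → x ∈ Q₂ := fun h => h₂ h; simp only [Set.mem_sdiff]; tauto
    have hzero : L.HomologyZero (Q₂ \ P₂) := hB ▸ MVField.homologyZero_diff_of_invPartIn_eq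
      hP.compat_diff hQ.compat_diff hinv (hB ▸ hQ.closed₂.facetConvex_diff hP.closed₂)
    obtain ⟨e⟩ := (hQ.closed₂.closedIn_diff hQ.subset P₂).nonempty_homology_diff_equiv
      (hP.closed₁.facetConvex_diff hP.closed₂) hzero k
    exact hD ▸ ⟨e⟩
  · have hclosed := hP.closed₁.closedIn_diff h₁ P₂
    have hconv := hQ.closed₁.facetConvex_diff hP.closed₂
    exact hclosed.nonempty_homology_equiv hconv (MVField.homologyZero_diff_of_invPartIn_eq
      hQ.compat_diff hP.compat_diff hinv.symm (hconv.diff_of_closedIn hclosed)) k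

/-- Theorem: semi-equal index pairs of the same isolated invariant set have isomorphic
(relative) Lefschetz homology. -/
theorem semi_equal_index_pairs (L : Lefschetz R X) (F : MVField L)
    (hX : F.InvariantIn Set.univ Set.univ) (S : Set X) (hS : F.IsoInvIn Set.univ S)
    (P₁ P₂ Q₁ Q₂ : Set X) (hP : F.IndexPair S P₁ P₂) (hQ : F.IndexPair S Q₁ Q₂)
    (h₁ : P₁ ⊆ Q₁) (h₂ : P₂ ⊆ Q₂) (hsemi : P₁ = Q₁ ∨ P₂ = Q₂) :
    ∀ k, Nonempty (L.homology (P₁ \ P₂) k ≃ₗ[R] L.homology (Q₁ \ Q₂) k) :=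
  semi_equal_index_pairs_general L F S P₁ P₂ Q₁ Q₂ hP hQ h₁ h₂ hsemi
end
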